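/- There is no word w over {a,b} such that both wa and wb are forbidden, i.e., such that there exist nonempty words t_1, t_2 with wa a prefix of t_1^∞, wb a prefix of t_2^∞, len(wa) > len(t_1)^2, and len(wb) > len(t_2)^2. -/

import Mathlib

/-!
Write `p = |t₁|`, `q = |t₂|`, `r = |w|` and `L = lcm p q`. Since `L ≤ pq ≤ max(p, q)² ≤ r`,
position `r - L` lies inside `w`. Periodicity of `wa` with period `p` and of `wb` with
period `q`, both dividing `L`, gives `a = (wa)[r] = w[r - L] = (wb)[r] = b`.
-/

namespace List

variable {α : Type*}

theorem getElem?_flatten_replicate (t : List α) (n : ℕ) {i : ℕ}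
    (hi : i < ((replicate n t).flatten).length) :
    ((replicate n t).flatten)[i]? = t[i % t.length]? := by
  induction n generalizing i with
  | zero => simp at hi
  | succ n ih =>
    rw [replicate_succ, flatten_cons] at hi ⊢
    rcases lt_or_ge i t.length with hit | hti
    · rw [getElem?_append_left hit, Nat.mod_eq_of_lt hit]
    · rw [getElem?_append_right hti, ih (by rw [length_append] at hi; omega),
        ← Nat.mod_eq_sub_mod hti]

theorem IsPrefix.getElem?_eq_of_modEq {u t : List α} {n i j : ℕ}
    (h : u <+: (replicate n t).flatten) (hi : i < u.length) (hj : j < u.length)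
    (hij : i ≡ j [MOD t.length]) : u[i]? = u[j]? := by
  obtain ⟨s, hs⟩ := h
  have hlen : u.length ≤ ((replicate n t).flatten).length := by
    rw [← hs, length_append]; omega
  rw [← getElem?_append_left (l₂ := s) hi, ← getElem?_append_left (l₂ := s) hj, hs,
    getElem?_flatten_replicate t n (hi.trans_le hlen),
    getElem?_flatten_replicate t n (hj.trans_le hlen), hij]

end List

theorem Nat.lcm_le_of_sq_le {p q r : ℕ} (hp : p ^ 2 ≤ r) (hq : q ^ 2 ≤ r) : p.lcm q ≤ r := by
  have hpq : p * q ≤ r := by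
    rcases le_total p q with h | h <;> nlinarith
  rcases Nat.eq_zero_or_pos (p * q) with h0 | h0
  · rw [Nat.lcm, h0, Nat.zero_div]
    exact Nat.zero_le r
  · exact (Nat.le_of_dvd h0 (Nat.lcm_dvd_mul p q)).trans hpq

/-- There is no word `w` over `{a,b}` such that both `wa` and `wb` are forbidden:
there are no nonempty words `t₁, t₂` with `wa` a prefix of `t₁^∞`, `wb` a prefix
of `t₂^∞`, `len wa > (len t₁)^2` and `len wb > (len t₂)^2`. -/
theorem stmt_15 :
    ¬ ∃ (w t₁ t₂ : List Bool), t₁ ≠ [] ∧ t₂ ≠ [] ∧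
      (∃ n : ℕ, (w ++ [true]) <+: (List.replicate n t₁).flatten) ∧
      (∃ n : ℕ, (w ++ [false]) <+: (List.replicate n t₂).flatten) ∧
      t₁.length ^ 2 < (w ++ [true]).length ∧
      t₂.length ^ 2 < (w ++ [false]).length := by
  rintro ⟨w, t₁, t₂, ht₁, ht₂, ⟨n₁, h₁⟩, ⟨n₂, h₂⟩, hl₁, hl₂⟩
  simp only [List.length_append, List.length_singleton, Nat.lt_succ_iff] at hl₁ hl₂
  set L := t₁.length.lcm t₂.length
  have hL : L ≤ w.length := Nat.lcm_le_of_sq_le hl₁ hl₂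
  have hL_pos : 0 < L := Nat.lcm_pos (List.length_pos_iff.mpr ht₁) (List.length_pos_iff.mpr ht₂)
  have hj : w.length - L < w.length := by omega
  have hshift {p : ℕ} (hp : p ∣ L) : w.length ≡ w.length - L [MOD p] := by
    simpa [Nat.sub_add_cancel hL] using (Nat.modEq_zero_iff_dvd.mpr hp).add_left (w.length - L)
  have : some true = some false := calc
    some true = (w ++ [true])[w.length]? := by simp
    _ = (w ++ [true])[w.length - L]? :=
      h₁.getElem?_eq_of_modEq (by simp) (by simp) (hshift (Nat.dvd_lcm_left _ _))
    _ = w[w.length - L]? := List.getElem?_append_left hj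
    _ = (w ++ [false])[w.length - L]? := (List.getElem?_append_left hj).symm
    _ = (w ++ [false])[w.length]? :=
      h₂.getElem?_eq_of_modEq (by simp) (by simp) (hshift (Nat.dvd_lcm_right _ _)).symm
    _ = some false := by simp
  simp at this
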